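/- arXiv:1307.4219 — 2 statements merged into one kernel-verified Lean document; each statement's English description precedes it below -/
import Mathlib

section
/- Let f(z,w) = μ(2z\bar{z} + z²\bar{w} + \bar{z}²w)/(2(1-w\bar{w})) - 2k ln(1-w\bar{w}) be the Kähler potential on the Siegel–Jacobi disk. Then its complex Hessian has entries h_{z\bar{z}} = ∂²f/∂z∂\bar{z} = μ/P, h_{z\bar{w}} = ∂²f/∂z∂\bar{w} = μη/P, h_{w\bar{w}} = ∂²f/∂w∂\bar{w} = μ|η|²/P + 2k/P², where P = 1 - w\bar{w} and η = (z + \bar{z}w)/P. -/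
/-! With `P = 1 - w w̄` and `η̄ = (z̄ + z w̄) / P`, the first partials are `∂_z f = μ η̄` and
`∂_w f = μ η̄² / 2 + 2k w̄ / P`. Both `η̄` and `w̄ / P` are Möbius functions of `w̄`, with
derivatives `(z + z̄ w) / P² = η / P` and `1 / P²`; this gives the three entries. -/

open Complex

/-- Polarized Kähler potential of the Siegel–Jacobi disk, a holomorphic function of the
four independent variables `(z, z̄, w, w̄)`; Wirtinger derivatives of the real potential
are the genuine complex partial derivatives of this polarization evaluated at
`z̄ = conj z`, `w̄ = conj w`. -/
noncomputable def sjPotential (k μ : ℝ) (z zb w wb : ℂ) : ℂ :=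
  (μ : ℂ) * (2 * z * zb + z ^ 2 * wb + zb ^ 2 * w) / (2 * (1 - w * wb)) -
    2 * (k : ℂ) * Complex.log (1 - w * wb)

theorem hasDerivAt_add_mul_div_one_sub_mul {𝕜 : Type*} [NontriviallyNormedField 𝕜]
    {a b c x : 𝕜} (hx : 1 - c * x ≠ 0) :
    HasDerivAt (fun x => (a + b * x) / (1 - c * x)) ((b + a * c) / (1 - c * x) ^ 2) x := by
  have hnum : HasDerivAt (fun x => a + b * x) b x := by
    simpa using ((hasDerivAt_id x).const_mul b).const_add a
  have hden : HasDerivAt (fun x => 1 - c * x) (-c) x := by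
    simpa using ((hasDerivAt_id x).const_mul c).const_sub 1
  refine (hnum.div hden hx).congr_deriv ?_
  ring

theorem one_sub_mul_conj_mem_slitPlane {w : ℂ} (hw : ‖w‖ < 1) :
    1 - w * starRingEnd ℂ w ∈ slitPlane := by
  have h : ‖w‖ ^ 2 < 1 := by nlinarith [norm_nonneg w]
  rw [mul_conj, normSq_eq_norm_sq, ← ofReal_one, ← ofReal_sub, ofReal_mem_slitPlane]
  linarith

section Partials

variable (k μ : ℝ) (z zb w wb : ℂ)

theorem hasDerivAt_sjPotential_z :
    HasDerivAt (fun z' => sjPotential k μ z' zb w wb)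
      (μ * ((zb + z * wb) / (1 - w * wb))) z := by
  have hnum : HasDerivAt (fun z' : ℂ => 2 * z' * zb + z' ^ 2 * wb + zb ^ 2 * w)
      (2 * zb + 2 * z * wb) z := by
    simpa [mul_comm] using
      ((((hasDerivAt_id z).const_mul 2).mul_const zb).add
        ((hasDerivAt_pow 2 z).mul_const wb)).add_const (zb ^ 2 * w)
  refine (((hnum.const_mul (μ : ℂ)).div_const (2 * (1 - w * wb))).sub_const
    (2 * (k : ℂ) * log (1 - w * wb))).congr_deriv ?_
  rw [mul_div_assoc, show 2 * zb + 2 * z * wb = 2 * (zb + z * wb) by ring,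
    mul_div_mul_left _ _ two_ne_zero]

theorem hasDerivAt_sjPotential_w (hs : 1 - w * wb ∈ slitPlane) :
    HasDerivAt (fun w' => sjPotential k μ z zb w' wb)
      (μ / 2 * ((zb + z * wb) / (1 - w * wb)) ^ 2 + 2 * k * (wb / (1 - w * wb))) w := by
  have hP : 1 - w * wb ≠ 0 := slitPlane_ne_zero hs
  have hnum : HasDerivAt (fun w' : ℂ => μ * (2 * z * zb + z ^ 2 * wb + zb ^ 2 * w'))
      (μ * zb ^ 2) w := by
    simpa using (((hasDerivAt_id w).const_mul (zb ^ 2)).const_add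
      (2 * z * zb + z ^ 2 * wb)).const_mul (μ : ℂ)
  have hP' : HasDerivAt (fun w' : ℂ => 1 - w' * wb) (-wb) w := by
    simpa using ((hasDerivAt_id w).mul_const wb).const_sub 1
  refine ((hnum.div (hP'.const_mul 2) (mul_ne_zero two_ne_zero hP)).sub
    ((hP'.clog hs).const_mul (2 * (k : ℂ)))).congr_deriv ?_
  field_simp
  ring

theorem hasDerivAt_deriv_sjPotential_z_zb :
    HasDerivAt (fun zb => deriv (fun z' => sjPotential k μ z' zb w wb) z)
      (μ / (1 - w * wb)) zb := by
  simp only [(hasDerivAt_sjPotential_z k μ _ _ w wb).deriv]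
  refine ((((hasDerivAt_id zb).add_const (z * wb)).div_const (1 - w * wb)).const_mul
    (μ : ℂ)).congr_deriv (mul_one_div _ _)

theorem hasDerivAt_deriv_sjPotential_z_wb (hP : 1 - w * wb ≠ 0) :
    HasDerivAt (fun wb => deriv (fun z' => sjPotential k μ z' zb w wb) z)
      (μ * ((z + zb * w) / (1 - w * wb)) / (1 - w * wb)) wb := by
  simp only [(hasDerivAt_sjPotential_z k μ z zb w _).deriv]
  refine ((hasDerivAt_add_mul_div_one_sub_mul hP).const_mul (μ : ℂ)).congr_deriv ?_
  field_simp

theorem hasDerivAt_deriv_sjPotential_w_wb (hs : 1 - w * wb ∈ slitPlane) :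
    HasDerivAt (fun wb => deriv (fun w' => sjPotential k μ z zb w' wb) w)
      (μ * ((z + zb * w) / (1 - w * wb)) * ((zb + z * wb) / (1 - w * wb)) / (1 - w * wb)
        + 2 * k / (1 - w * wb) ^ 2) wb := by
  have hP : 1 - w * wb ≠ 0 := slitPlane_ne_zero hs
  have hη := hasDerivAt_add_mul_div_one_sub_mul (a := zb) (b := z) hP
  have hwb := hasDerivAt_add_mul_div_one_sub_mul (a := 0) (b := 1) hP
  simp only [zero_add, one_mul, zero_mul, add_zero] at hwb
  have hpartial : (fun wb => deriv (fun w' => sjPotential k μ z zb w' wb) w) =ᶠ[nhds wb]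
      fun wb => μ / 2 * ((zb + z * wb) / (1 - w * wb)) ^ 2 + 2 * k * (wb / (1 - w * wb)) := by
    have hopen : ∀ᶠ wb' in nhds wb, 1 - w * wb' ∈ slitPlane :=
      (by fun_prop : Continuous fun wb' => 1 - w * wb').continuousAt.eventually_mem
        (isOpen_slitPlane.mem_nhds hs)
    filter_upwards [hopen] with wb' hs'
    exact (hasDerivAt_sjPotential_w k μ z zb w wb' hs').deriv
  refine ((((hη.pow 2).const_mul (μ / 2 : ℂ)).add (hwb.const_mul (2 * (k : ℂ)))).congr_deriv
    ?_).congr_of_eventuallyEq hpartial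
  simp only [Nat.cast_ofNat, Nat.reduceSub, pow_one]
  field_simp

end Partials

theorem siegelJacobi_hessian_general (k μ : ℝ)
    (z w : ℂ) (hw : ‖w‖ < 1) :
    let P : ℂ := 1 - w * starRingEnd ℂ w
    let η : ℂ := (z + starRingEnd ℂ z * w) / P
    let ηb : ℂ := (starRingEnd ℂ z + z * starRingEnd ℂ w) / P
    (deriv (fun zb => deriv (fun z' => sjPotential k μ z' zb w (starRingEnd ℂ w)) z)
        (starRingEnd ℂ z) = (μ : ℂ) / P) ∧
    (deriv (fun wb => deriv (fun z' => sjPotential k μ z' (starRingEnd ℂ z) w wb) z)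
        (starRingEnd ℂ w) = (μ : ℂ) * η / P) ∧
    (deriv (fun wb => deriv (fun w' => sjPotential k μ z (starRingEnd ℂ z) w' wb) w)
        (starRingEnd ℂ w) = (μ : ℂ) * η * ηb / P + 2 * (k : ℂ) / P ^ 2) := by
  intro P η ηb
  have hs := one_sub_mul_conj_mem_slitPlane hw
  exact ⟨(hasDerivAt_deriv_sjPotential_z_zb k μ z _ w _).deriv,
    (hasDerivAt_deriv_sjPotential_z_wb k μ z _ w _ (slitPlane_ne_zero hs)).deriv,
    (hasDerivAt_deriv_sjPotential_w_wb k μ z _ w _ hs).deriv⟩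

/-- The complex Hessian of the Kähler potential
`f = μ(2 z z̄ + z² w̄ + z̄² w)/(2(1-w w̄)) - 2k ln(1-w w̄)` has entries
`h_{z z̄} = μ/P`, `h_{z w̄} = μη/P`, `h_{w w̄} = μ|η|²/P + 2k/P²`,
where `P = 1 - w w̄` and `η = (z + z̄ w)/P`. -/
theorem siegelJacobi_hessian (k μ : ℝ) (hk : 0 < k) (hμ : 0 < μ)
    (z w : ℂ) (hw : ‖w‖ < 1) :
    let P : ℂ := 1 - w * starRingEnd ℂ w
    let η : ℂ := (z + starRingEnd ℂ z * w) / P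
    let ηb : ℂ := (starRingEnd ℂ z + z * starRingEnd ℂ w) / P
    (deriv (fun zb => deriv (fun z' => sjPotential k μ z' zb w (starRingEnd ℂ w)) z)
        (starRingEnd ℂ z) = (μ : ℂ) / P) ∧
    (deriv (fun wb => deriv (fun z' => sjPotential k μ z' (starRingEnd ℂ z) w wb) z)
        (starRingEnd ℂ w) = (μ : ℂ) * η / P) ∧
    (deriv (fun wb => deriv (fun w' => sjPotential k μ z (starRingEnd ℂ z) w' wb) w)
        (starRingEnd ℂ w) = (μ : ℂ) * η * ηb / P + 2 * (k : ℂ) / P ^ 2) :=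
  siegelJacobi_hessian_general k μ z w hw
end

section
/- The determinant of the metric matrix of the Siegel–Jacobi disk equals G(z,w) = h_{z\bar{z}} h_{w\bar{w}} - h_{z\bar{w}} h_{w\bar{z}} = 2kμ/(1-w\bar{w})³, where h_{z\bar{z}} = μ/P, h_{z\bar{w}} = μη/P, h_{w\bar{z}} = μ\bar{η}/P, h_{w\bar{w}} = μ|η|²/P + 2k/P², P = 1-w\bar{w}, η = (z+\bar{z}w)/P. -/
open Complex

lemma aux_det (k μ z zb w wb P : ℂ) :
    ((μ : ℂ) / P) * ((μ : ℂ) * ((z + zb * w) / P) * ((zb + z * wb) / P) / P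
        + 2 * (k : ℂ) / P ^ 2) -
      ((μ : ℂ) * ((z + zb * w) / P) / P) * ((μ : ℂ) * ((zb + z * wb) / P) / P) =
      2 * (k : ℂ) * (μ : ℂ) / P ^ 3 := by
  ring

/-- The determinant of the metric matrix of the Siegel–Jacobi disk equals
`G(z,w) = h_{z z̄} h_{w w̄} - h_{z w̄} h_{w z̄} = 2kμ/(1 - w w̄)³`. -/
theorem siegelJacobi_metric_det (k μ : ℝ) (hk : 0 < k) (hμ : 0 < μ)
    (z w : ℂ) (hw : ‖w‖ < 1) :
    let P : ℂ := 1 - w * starRingEnd ℂ w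
    let η : ℂ := (z + starRingEnd ℂ z * w) / P
    let ηb : ℂ := (starRingEnd ℂ z + z * starRingEnd ℂ w) / P
    ((μ : ℂ) / P) * ((μ : ℂ) * η * ηb / P + 2 * (k : ℂ) / P ^ 2) -
        ((μ : ℂ) * η / P) * ((μ : ℂ) * ηb / P) =
      2 * (k : ℂ) * (μ : ℂ) / P ^ 3 := by
  intro P η ηb
  exact aux_det k μ z (starRingEnd ℂ z) w (starRingEnd ℂ w) P
end
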